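/- Let A be a self-adjoint endomorphism with eigenvalues λ₁,…,λₙ and suppose S_r = 0 but S_{r+1} ≠ 0 for some 1 ≤ r < n. Then the Newton transformation P_{r−1} is definite (either positive definite or negative definite). -/

import Mathlib

/-
On the eigenvector `b i` the Newton transformation `P_{r-1}` acts as the scalar
`(-1)^(r-1) e_{r-1}(λ̂ᵢ)`, where `λ̂ᵢ` is the spectrum with `λᵢ` removed. Since
`e_j(λ) = e_j(λ̂ᵢ) + λᵢ e_{j-1}(λ̂ᵢ)`, the hypothesis `S_r = 0` turns `e_{r-1}(λ̂ᵢ) S_{r+1}` into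
`e_{r-1}(λ̂ᵢ) e_{r+1}(λ̂ᵢ) - e_r(λ̂ᵢ)²`. This is `≤ 0` by Newton's inequality and `≠ 0` because two
consecutive vanishing elementary symmetric functions of real numbers force the next one to vanish.
Hence every eigenvalue of `P_{r-1}` has the sign of `-(-1)^(r-1) S_{r+1}`.

Both facts about real numbers are reduced to statements about few numbers by two operations:
differentiating `∏ (X - xⱼ)`, which keeps the roots real (Rolle) and the means
`e_j / (m choose j)`, and passing to reciprocals, which reverses the sequence `e_0, …, e_m`.
-/

open scoped InnerProductSpace

/-- The `r`-th elementary symmetric polynomial of `λ₁, …, λₙ`. -/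
noncomputable def esymm (n r : ℕ) (l : Fin n → ℝ) : ℝ :=
  ∑ s ∈ (Finset.univ : Finset (Fin n)).powersetCard r, ∏ i ∈ s, l i

/-- The Newton transformations associated to an endomorphism `A` and the
elementary symmetric functions `S` of its eigenvalues:
`P₀ = I`, `P_r = (−1)^r S_r I + A ∘ P_{r−1}`. -/
noncomputable def newtonP {E : Type*} [NormedAddCommGroup E] [InnerProductSpace ℝ E]
    (A : E →ₗ[ℝ] E) (S : ℕ → ℝ) : ℕ → (E →ₗ[ℝ] E)
  | 0 => LinearMap.id
  | r + 1 => ((-1 : ℝ) ^ (r + 1) * S (r + 1)) • LinearMap.id + A ∘ₗ newtonP A S r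

namespace Polynomial

theorem Splits.derivative {p : ℝ[X]} (hp : p.Splits) : p.derivative.Splits := by
  rw [splits_iff_card_roots] at hp ⊢
  have := card_roots_le_derivative p
  have := card_roots' p.derivative
  have := natDegree_derivative_le p
  omega

theorem Splits.iterate_derivative {p : ℝ[X]} (hp : p.Splits) (k : ℕ) :
    (Polynomial.derivative^[k] p).Splits := by
  induction k with
  | zero => exact hp
  | succ k ih => rw [Function.iterate_succ_apply']; exact ih.derivative

end Polynomial

namespace Nat

theorem descFactorial_mul_choose_eq {m d j : ℕ} (hjd : j ≤ d) (hdm : d ≤ m) :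
    m.descFactorial (m - d) * d.choose j = (m - j).descFactorial (m - d) * m.choose j := by
  rw [descFactorial_eq_factorial_mul_choose, descFactorial_eq_factorial_mul_choose,
    choose_symm hdm, show m - d = m - j - (d - j) by omega, choose_symm (by omega),
    mul_assoc, choose_mul hjd, mul_comm (m.choose j), mul_assoc]

theorem choose_mul_choose_add_two_le_sq (n k : ℕ) :
    n.choose k * n.choose (k + 2) ≤ n.choose (k + 1) ^ 2 := by
  rcases Nat.lt_or_ge n (k + 1) with hn | hn
  · simp [choose_eq_zero_of_lt (by omega : n < k + 2)]
  have h1 := choose_succ_right_eq n k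
  have h2 := choose_succ_right_eq n (k + 1)
  obtain ⟨d, hd⟩ : ∃ d, n - k = d + 1 := ⟨n - (k + 1), by omega⟩
  rw [hd] at h1
  rw [show n - (k + 1) = d by omega] at h2
  refine Nat.le_of_mul_le_mul_right (c := (d + 1) * (k + 2)) ?_ (by positivity)
  calc n.choose k * n.choose (k + 2) * ((d + 1) * (k + 2))
      = (n.choose k * (d + 1)) * (n.choose (k + 2) * (k + 2)) := by ring
    _ = n.choose (k + 1) ^ 2 * ((k + 1) * d) := by rw [← h1, h2]; ring
    _ ≤ n.choose (k + 1) ^ 2 * ((d + 1) * (k + 2)) := Nat.mul_le_mul_left _ (by nlinarith)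

end Nat

namespace Multiset

section CommSemiring

variable {R : Type*} [CommSemiring R]

@[simp]
theorem esymm_zero (s : Multiset R) : s.esymm 0 = 1 := by
  simp [esymm, powersetCard_zero_left]

theorem esymm_cons_succ (a : R) (s : Multiset R) (k : ℕ) :
    (a ::ₘ s).esymm (k + 1) = s.esymm (k + 1) + a * s.esymm k := by
  simp only [esymm, powersetCard_cons, map_add, sum_add, map_map, Function.comp_def, prod_cons,
    sum_map_mul_left]

theorem esymm_eq_zero_of_card_lt {s : Multiset R} {k : ℕ} (h : card s < k) : s.esymm k = 0 := by
  simp [esymm, powersetCard_eq_empty _ h]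

theorem esymm_card (s : Multiset R) : s.esymm (card s) = s.prod := by
  induction s using Multiset.induction with
  | empty => simp
  | cons a s ih =>
    rw [card_cons, esymm_cons_succ, esymm_eq_zero_of_card_lt (Nat.lt_succ_self _), ih, prod_cons,
      zero_add]

end CommSemiring

theorem sum_map_sq {R : Type*} [CommRing R] (s : Multiset R) :
    (s.map (· ^ 2)).sum = s.esymm 1 ^ 2 - 2 * s.esymm 2 := by
  induction s using Multiset.induction with
  | empty => simp [esymm_eq_zero_of_card_lt (by simp : card (0 : Multiset R) < 1),
      esymm_eq_zero_of_card_lt (by simp : card (0 : Multiset R) < 2)]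
  | cons a s ih =>
    rw [map_cons, sum_cons, ih, esymm_cons_succ, esymm_cons_succ, esymm_zero]
    ring

theorem esymm_map_inv_mul_prod {K : Type*} [Field K] {s : Multiset K} (hs : (0 : K) ∉ s)
    {j : ℕ} (hj : j ≤ card s) : (s.map (·⁻¹)).esymm j * s.prod = s.esymm (card s - j) := by
  induction s using Multiset.induction generalizing j with
  | empty => simp_all
  | cons a s ih =>
    obtain ⟨ha, hs⟩ : a ≠ 0 ∧ (0 : K) ∉ s := by simpa [eq_comm] using hs
    rw [card_cons] at hj ⊢
    rcases j with _ | j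
    · rw [esymm_zero, one_mul, Nat.sub_zero, ← card_cons, esymm_card]
    · rw [map_cons, esymm_cons_succ, prod_cons, Nat.add_sub_add_right]
      have h1 := ih hs (j := j) (by omega)
      rcases Nat.lt_or_ge j (card s) with hjs | hjs
      · have h2 := ih hs (j := j + 1) hjs
        obtain ⟨i, hi⟩ : ∃ i, card s - j = i + 1 := ⟨card s - j - 1, by omega⟩
        rw [hi] at h1
        rw [show card s - (j + 1) = i by omega] at h2
        rw [hi, esymm_cons_succ, ← h1, ← h2, add_mul, mul_mul_mul_comm a⁻¹, inv_mul_cancel₀ ha,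
          one_mul]
        ring
      · rw [show j = card s by omega, Nat.sub_self] at h1 ⊢
        rw [esymm_zero] at h1
        rw [esymm_eq_zero_of_card_lt (by simp), esymm_zero, ← h1, zero_add, mul_mul_mul_comm,
          inv_mul_cancel₀ ha, one_mul]

noncomputable def esymmMean {K : Type*} [Field K] (s : Multiset K) (k : ℕ) : K :=
  s.esymm k / (card s).choose k

section esymmMean

variable {K : Type*} [Field K]

theorem esymm_eq_choose_mul_esymmMean [CharZero K] (s : Multiset K) {k : ℕ} (hk : k ≤ card s) :
    s.esymm k = (card s).choose k * s.esymmMean k := by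
  rw [esymmMean, mul_div_cancel₀ _ (Nat.cast_ne_zero.mpr (Nat.choose_pos hk).ne')]

theorem esymmMean_eq_zero_iff [CharZero K] {s : Multiset K} {k : ℕ} :
    s.esymmMean k = 0 ↔ s.esymm k = 0 := by
  rcases Nat.lt_or_ge (card s) k with hlt | hle
  · simp [esymmMean, esymm_eq_zero_of_card_lt hlt]
  · simp [esymm_eq_choose_mul_esymmMean s hle, (Nat.choose_pos hle).ne']

theorem esymmMean_card (s : Multiset K) : s.esymmMean (card s) = s.prod := by
  rw [esymmMean, esymm_card, Nat.choose_self, Nat.cast_one, div_one]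

theorem esymmMean_map_inv_mul_prod {s : Multiset K} (hs : (0 : K) ∉ s) {j : ℕ}
    (hj : j ≤ card s) : (s.map (·⁻¹)).esymmMean j * s.prod = s.esymmMean (card s - j) := by
  rw [esymmMean, esymmMean, card_map, div_mul_eq_mul_div, esymm_map_inv_mul_prod hs hj,
    Nat.choose_symm hj]

theorem esymmMean_two_le_sq {s : Multiset K} [LinearOrder K] [IsStrictOrderedRing K]
    (hs : card s = 2) : s.esymmMean 2 ≤ s.esymmMean 1 ^ 2 := by
  obtain ⟨x, y, rfl⟩ := card_eq_two.mp hs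
  simp only [esymmMean, insert_eq_cons, esymm_pair_one, esymm_pair_two]
  norm_num
  nlinarith [sq_nonneg (x - y)]

end esymmMean

open Polynomial in
theorem coeff_iterate_derivative_prod_X_sub_C {R : Type*} [CommRing R] (s : Multiset R) {d i : ℕ}
    (hd : d ≤ card s) (hi : i ≤ d) :
    (derivative^[card s - d] (s.map (X - C ·)).prod).coeff i =
      (i + (card s - d)).descFactorial (card s - d) * ((-1) ^ (d - i) * s.esymm (d - i)) := by
  rw [coeff_iterate_derivative, nsmul_eq_mul, prod_X_sub_C_coeff s (by omega),
    show card s - (i + (card s - d)) = d - i by omega]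

open Polynomial in
theorem exists_card_eq_esymmMean_eq (s : Multiset ℝ) {d : ℕ} (hd : d ≤ card s) :
    ∃ t : Multiset ℝ, card t = d ∧ ∀ j ≤ d, t.esymmMean j = s.esymmMean j := by
  set m := card s
  set q := derivative^[m - d] (s.map (X - C ·)).prod
  have hq : q.Splits :=
    (Splits.multisetProd fun f hf => by
      obtain ⟨a, -, rfl⟩ := mem_map.mp hf; exact Splits.X_sub_C a).iterate_derivative _
  have hlead : q.coeff d = (m.descFactorial (m - d) : ℝ) := by
    rw [coeff_iterate_derivative_prod_X_sub_C s hd le_rfl, Nat.sub_self,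
      show d + (m - d) = m by omega]
    simp [m]
  have hA : (m.descFactorial (m - d) : ℝ) ≠ 0 := by
    rw [Nat.cast_ne_zero, Ne, Nat.descFactorial_eq_zero_iff_lt]; omega
  have hdeg : q.natDegree = d := by
    refine le_antisymm ((natDegree_iterate_derivative _ _).trans ?_)
      (le_natDegree_of_ne_zero (hlead ▸ hA))
    rw [natDegree_multiset_prod_X_sub_C_eq_card]; omega
  refine ⟨q.roots, by rw [← hq.natDegree_eq_card_roots, hdeg], fun j hj => ?_⟩
  have hvieta := coeff_eq_esymm_roots_of_splits hq (k := d - j) (by omega)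
  rw [coeff_iterate_derivative_prod_X_sub_C s hd (by omega), leadingCoeff, hdeg, hlead,
    show d - (d - j) = j by omega, show d - j + (m - d) = m - j by omega] at hvieta
  have hmul : (m.descFactorial (m - d) : ℝ) * q.roots.esymm j
      = ((m - j).descFactorial (m - d) : ℝ) * s.esymm j := by
    refine mul_left_cancel₀ (pow_ne_zero j (neg_ne_zero.mpr one_ne_zero)) ?_
    linear_combination -hvieta
  have hchoose : (m.descFactorial (m - d) * d.choose j : ℝ)
      = (m - j).descFactorial (m - d) * m.choose j := by
    exact_mod_cast Nat.descFactorial_mul_choose_eq hj hd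
  rw [esymmMean, esymmMean, ← hq.natDegree_eq_card_roots, hdeg,
    div_eq_div_iff (Nat.cast_ne_zero.mpr (Nat.choose_pos hj).ne')
      (Nat.cast_ne_zero.mpr (Nat.choose_pos (hj.trans hd)).ne')]
  refine mul_left_cancel₀ hA ?_
  linear_combination (m.choose j : ℝ) * hmul - s.esymm j * hchoose

theorem esymmMean_mul_le_sq (s : Multiset ℝ) {k : ℕ} (hk : k + 2 ≤ card s) :
    s.esymmMean k * s.esymmMean (k + 2) ≤ s.esymmMean (k + 1) ^ 2 := by
  obtain ⟨t, ht, hts⟩ := s.exists_card_eq_esymmMean_eq hk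
  rw [← hts k (by omega), ← hts (k + 1) (by omega), ← hts (k + 2) le_rfl, ← ht, esymmMean_card]
  by_cases h0 : (0 : ℝ) ∈ t
  · rw [prod_eq_zero h0, mul_zero]
    positivity
  obtain ⟨w, hw, hwu⟩ := (t.map (·⁻¹)).exists_card_eq_esymmMean_eq (d := 2) (by simp; omega)
  have h1 := esymmMean_map_inv_mul_prod h0 (j := 1) (by omega)
  have h2 := esymmMean_map_inv_mul_prod h0 (j := 2) (by omega)
  rw [← hwu 1 (by norm_num), ht, show k + 2 - 1 = k + 1 by omega] at h1
  rw [← hwu 2 le_rfl, ht, Nat.add_sub_cancel] at h2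
  calc t.esymmMean k * t.prod = w.esymmMean 2 * t.prod ^ 2 := by rw [← h2]; ring
    _ ≤ w.esymmMean 1 ^ 2 * t.prod ^ 2 := by gcongr; exact esymmMean_two_le_sq hw
    _ = t.esymmMean (k + 1) ^ 2 := by rw [← h1]; ring

theorem esymm_mul_le_sq (s : Multiset ℝ) (k : ℕ) :
    s.esymm k * s.esymm (k + 2) ≤ s.esymm (k + 1) ^ 2 := by
  rcases Nat.lt_or_ge (card s) (k + 2) with hlt | hle
  · rw [esymm_eq_zero_of_card_lt hlt, mul_zero]
    positivity
  have hC : ((card s).choose k * (card s).choose (k + 2) : ℝ) ≤ (card s).choose (k + 1) ^ 2 := by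
    exact_mod_cast Nat.choose_mul_choose_add_two_le_sq (card s) k
  rw [esymm_eq_choose_mul_esymmMean s (by omega), esymm_eq_choose_mul_esymmMean s hle,
    esymm_eq_choose_mul_esymmMean s (by omega)]
  calc _ = ((card s).choose k * (card s).choose (k + 2) : ℝ)
        * (s.esymmMean k * s.esymmMean (k + 2)) := by ring
    _ ≤ ((card s).choose k * (card s).choose (k + 2) : ℝ) * s.esymmMean (k + 1) ^ 2 := by
      gcongr
      exact s.esymmMean_mul_le_sq hle
    _ ≤ (card s).choose (k + 1) ^ 2 * s.esymmMean (k + 1) ^ 2 := by gcongr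
    _ = _ := by ring

theorem esymm_add_three_eq_zero {s : Multiset ℝ} {k : ℕ} (h1 : s.esymm (k + 1) = 0)
    (h2 : s.esymm (k + 2) = 0) : s.esymm (k + 3) = 0 := by
  rcases Nat.lt_or_ge (card s) (k + 3) with hlt | hle
  · exact esymm_eq_zero_of_card_lt hlt
  obtain ⟨t, ht, hts⟩ := s.exists_card_eq_esymmMean_eq hle
  rw [← esymmMean_eq_zero_iff, ← hts _ (by omega), esymmMean_eq_zero_iff] at h1 h2
  rw [← esymmMean_eq_zero_iff, ← hts _ le_rfl, ← ht, esymmMean_card]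
  by_contra hprod
  have h0 : (0 : ℝ) ∉ t := fun h => hprod (prod_eq_zero h)
  have e1 := esymm_map_inv_mul_prod h0 (j := 1) (by omega)
  have e2 := esymm_map_inv_mul_prod h0 (j := 2) (by omega)
  rw [ht, show k + 3 - 1 = k + 2 by omega, h2, mul_eq_zero, or_iff_left hprod] at e1
  rw [ht, show k + 3 - 2 = k + 1 by omega, h1, mul_eq_zero, or_iff_left hprod] at e2
  have hsq := sum_map_sq (t.map (·⁻¹))
  rw [e1, e2] at hsq
  obtain ⟨a, ha⟩ := exists_mem_of_ne_zero (card_pos.mp (by omega : 0 < card t))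
  have hle := single_le_sum (fun x hx => by obtain ⟨y, -, rfl⟩ := mem_map.mp hx; positivity)
    _ (mem_map_of_mem (· ^ 2) (mem_map_of_mem (·⁻¹) ha))
  have : 0 < a⁻¹ ^ 2 := by have : a ≠ 0 := fun h => h0 (h ▸ ha); positivity
  linarith

theorem esymm_mul_esymm_cons_neg {s : Multiset ℝ} {μ : ℝ} {k : ℕ}
    (hk : (μ ::ₘ s).esymm (k + 1) = 0) (hk' : (μ ::ₘ s).esymm (k + 2) ≠ 0) :
    s.esymm k * (μ ::ₘ s).esymm (k + 2) < 0 := by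
  rw [esymm_cons_succ] at hk hk' ⊢
  have hne : s.esymm k ≠ 0 := by
    intro h0
    have h1 : s.esymm (k + 1) = 0 := by rw [h0, mul_zero, add_zero] at hk; exact hk
    rcases k with _ | k
    · simp at h0
    · exact hk' (by rw [esymm_add_three_eq_zero h0 h1, h1, mul_zero, add_zero])
  refine lt_of_le_of_ne ?_ (mul_ne_zero hne hk')
  have := s.esymm_mul_le_sq k
  linear_combination this + s.esymm (k + 1) * hk

end Multiset

section OrthonormalEigenbasis

variable {E : Type*} [NormedAddCommGroup E] [InnerProductSpace ℝ E]

theorem newtonP_apply_of_apply_eq_smul {A : E →ₗ[ℝ] E} {S : ℕ → ℝ} {x : E} {μ : ℝ}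
    {s : Multiset ℝ} (hx : A x = μ • x) (hS : ∀ k, S k = (μ ::ₘ s).esymm k) (k : ℕ) :
    newtonP A S k x = ((-1) ^ k * s.esymm k) • x := by
  induction k with
  | zero => simp [newtonP]
  | succ k ih =>
    rw [newtonP, LinearMap.add_apply, LinearMap.smul_apply, LinearMap.id_apply,
      LinearMap.comp_apply, ih, map_smul, hx, smul_smul, ← add_smul, hS, Multiset.esymm_cons_succ]
    congr 1
    ring

theorem inner_map_self_eq_sum_of_apply_eq_smul {ι : Type*} [Fintype ι]
    (b : OrthonormalBasis ι ℝ E) {T : E →ₗ[ℝ] E} {c : ι → ℝ} (hT : ∀ i, T (b i) = c i • b i)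
    (v : E) : ⟪T v, v⟫_ℝ = ∑ i, c i * ⟪b i, v⟫_ℝ ^ 2 := by
  have hTv : T v = ∑ i, (c i * ⟪b i, v⟫_ℝ) • b i := by
    conv_lhs => rw [← b.sum_repr' v]
    simp only [map_sum, map_smul, hT, smul_smul, mul_comm]
  rw [hTv, sum_inner]
  simp only [real_inner_smul_left]
  ring_nf

theorem inner_map_self_pos_of_apply_eq_smul {ι : Type*} [Fintype ι]
    (b : OrthonormalBasis ι ℝ E) {T : E →ₗ[ℝ] E} {c : ι → ℝ} (hT : ∀ i, T (b i) = c i • b i)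
    (hc : ∀ i, 0 < c i) {v : E} (hv : v ≠ 0) : 0 < ⟪T v, v⟫_ℝ := by
  obtain ⟨i, hi⟩ : ∃ i, ⟪b i, v⟫_ℝ ≠ 0 := by
    by_contra! h
    exact hv (by rw [← b.sum_repr' v]; simp [h])
  rw [inner_map_self_eq_sum_of_apply_eq_smul b hT]
  exact Finset.sum_pos' (fun j _ => by have := hc j; positivity)
    ⟨i, Finset.mem_univ i, by have := hc i; positivity⟩

theorem definite_of_apply_eq_smul {ι : Type*} [Fintype ι]
    (b : OrthonormalBasis ι ℝ E) {T : E →ₗ[ℝ] E} {c : ι → ℝ} (hT : ∀ i, T (b i) = c i • b i)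
    {σ : ℝ} (hσ : σ ≠ 0) (hc : ∀ i, c i * σ < 0) :
    (∀ v : E, v ≠ 0 → 0 < ⟪T v, v⟫_ℝ) ∨ (∀ v : E, v ≠ 0 → ⟪T v, v⟫_ℝ < 0) := by
  rcases hσ.lt_or_gt with hσ | hσ
  · exact .inl fun v hv =>
      inner_map_self_pos_of_apply_eq_smul b hT (fun i => pos_of_mul_neg_left (hc i) hσ.le) hv
  · refine .inr fun v hv => neg_pos.mp ?_
    rw [← inner_neg_left, ← LinearMap.neg_apply]
    refine inner_map_self_pos_of_apply_eq_smul b (c := fun i => -c i) (fun i => ?_)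
      (fun i => neg_pos.mpr (neg_of_mul_neg_left (hc i) hσ.le)) hv
    rw [LinearMap.neg_apply, hT, neg_smul]

end OrthonormalEigenbasis

theorem esymm_eq_esymm_cons_erase {n : ℕ} (lam : Fin n → ℝ) (i : Fin n) (k : ℕ) :
    esymm n k lam = (lam i ::ₘ (Finset.univ.erase i).val.map lam).esymm k := by
  rw [esymm, ← Finset.esymm_map_val, ← Multiset.map_cons, Finset.erase_val,
    Multiset.cons_erase (Finset.mem_univ_val i)]

theorem newtonP_definite_of_Sr_zero_general {E : Type*} [NormedAddCommGroup E]
    [InnerProductSpace ℝ E]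
    (n : ℕ)
    (A : E →ₗ[ℝ] E)
    (b : OrthonormalBasis (Fin n) ℝ E) (lam : Fin n → ℝ)
    (hb : ∀ i, A (b i) = lam i • b i)
    (S : ℕ → ℝ) (hS : ∀ r, S r = esymm n r lam)
    (r : ℕ)
    (hSr : S r = 0) (hSr' : S (r + 1) ≠ 0) :
    (∀ v : E, v ≠ 0 → 0 < ⟪newtonP A S (r - 1) v, v⟫_ℝ) ∨
    (∀ v : E, v ≠ 0 → ⟪newtonP A S (r - 1) v, v⟫_ℝ < 0) := by
  set s : Fin n → Multiset ℝ := fun i => (Finset.univ.erase i).val.map lam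
  have hS' : ∀ i k, S k = (lam i ::ₘ s i).esymm k := fun i k => by
    rw [hS, esymm_eq_esymm_cons_erase lam i]
  obtain ⟨k, rfl⟩ : ∃ k, r = k + 1 :=
    Nat.exists_eq_succ_of_ne_zero (by rintro rfl; rw [hS, esymm] at hSr; simp at hSr)
  rw [Nat.add_sub_cancel]
  refine definite_of_apply_eq_smul b (c := fun i => (-1) ^ k * (s i).esymm k)
    (fun i => newtonP_apply_of_apply_eq_smul (hb i) (hS' i) k)
    (mul_ne_zero (pow_ne_zero k (neg_ne_zero.mpr one_ne_zero)) hSr') fun i => ?_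
  have h := (s i).esymm_mul_esymm_cons_neg (hS' i _ ▸ hSr) (hS' i _ ▸ hSr')
  calc (-1) ^ k * (s i).esymm k * ((-1) ^ k * S (k + 2))
      = ((-1) ^ k) ^ 2 * ((s i).esymm k * S (k + 2)) := by ring
    _ < 0 := by rwa [← pow_mul, pow_mul', neg_one_sq, one_pow, one_mul, hS' i]

/-- If `S_r = 0` and `S_{r+1} ≠ 0` for some `1 ≤ r < n`, then `P_{r−1}` is
definite (positive or negative definite). -/
theorem newtonP_definite_of_Sr_zero {E : Type*} [NormedAddCommGroup E]
    [InnerProductSpace ℝ E] [FiniteDimensional ℝ E]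
    (n : ℕ) (hdim : Module.finrank ℝ E = n)
    (A : E →ₗ[ℝ] E) (hA : A.IsSymmetric)
    (b : OrthonormalBasis (Fin n) ℝ E) (lam : Fin n → ℝ)
    (hb : ∀ i, A (b i) = lam i • b i)
    (S : ℕ → ℝ) (hS : ∀ r, S r = esymm n r lam)
    (r : ℕ) (hr1 : 1 ≤ r) (hrn : r < n)
    (hSr : S r = 0) (hSr' : S (r + 1) ≠ 0) :
    (∀ v : E, v ≠ 0 → 0 < ⟪newtonP A S (r - 1) v, v⟫_ℝ) ∨
    (∀ v : E, v ≠ 0 → ⟪newtonP A S (r - 1) v, v⟫_ℝ < 0) :=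
  newtonP_definite_of_Sr_zero_general n A b lam hb S hS r hSr hSr'
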